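/- In the setting of the hierarchical meta-gradient identity, suppose additionally that there is a constant C with |∂π/∂Θ (Θ₀, θ)/π(Θ₀, θ)| ≤ C for almost every θ, and let Q be any probability measure on ℝ^d. Define the GEM estimator ĝ = ∫ (∂π/∂Θ (Θ₀, θ)/π(Θ₀, θ)) dQ(θ) and let post denote the posterior probability measure with density θ ↦ ℓ(θ)π(Θ₀, θ)/m(Θ₀). Then |ĝ − d/dΘ log m(Θ)|_{Θ = Θ₀}| ≤ C·√(2·KL(post ‖ Q)), where KL denotes the Kullback–Leibler divergence. -/

import Mathlib

/-!
By the Gradient-EM identity, `d/dΘ log m(Θ₀)` is the posterior mean of the prior score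
`∂_Θ pr / pr`, while `ĝ` is its mean under `Q`. The difference of the means of a function
bounded by `C` is at most `C` times the `L¹` distance `∫ |dpost/dQ - 1| dQ` of the densities, and
Pinsker's inequality bounds that distance by `√(2 KL(post ‖ Q))`. Pinsker is proved from the
pointwise bound `3 (x - 1)² ≤ (2x + 4) (x log x - x + 1)` and Cauchy–Schwarz.
-/

open MeasureTheory Real
open scoped ENNReal

open Classical in
/-- Kullback–Leibler divergence of `P` from `Q`, taken to be `+∞` if `P` is not absolutely
continuous with respect to `Q` (or if the log-likelihood ratio is not integrable). -/
noncomputable def klDiv {E : Type*} [MeasurableSpace E] (P Q : Measure E) : ℝ≥0∞ :=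
  if P ≪ Q ∧ Integrable (llr P Q) P then ENNReal.ofReal (∫ x, llr P Q x ∂P) else ⊤

open Set Filter Topology
open InformationTheory (klFun klFun_one hasDerivAt_klFun integrable_klFun_rnDeriv_iff
  integral_klFun_rnDeriv)

theorem isMinOn_Ici_of_sub_mul_hasDerivAt_nonneg {f f' : ℝ → ℝ} {a b : ℝ} (hba : b ≤ a)
    (hf : ContinuousOn f (Ici b)) (hf' : ∀ x > b, HasDerivAt f (f' x) x)
    (hsign : ∀ x > b, 0 ≤ (x - a) * f' x) : IsMinOn f (Ici b) a := by
  intro x (hx : b ≤ x)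
  rcases le_total x a with hxa | hax
  · have hy' : ∀ y ∈ interior (Icc b a), b < y := fun y hy => by
      rw [interior_Icc] at hy; exact hy.1
    refine antitoneOn_of_hasDerivWithinAt_nonpos (convex_Icc b a) (hf.mono Icc_subset_Ici_self)
      (fun y hy => (hf' y (hy' y hy)).hasDerivWithinAt) (fun y hy => ?_)
      ⟨hx, hxa⟩ ⟨hba, le_rfl⟩ hxa
    rw [interior_Icc] at hy
    exact nonpos_of_mul_nonneg_right (hsign y hy.1) (sub_neg.2 hy.2)
  · have hy' : ∀ y ∈ interior (Ici a), b < y := fun y hy =>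
      hba.trans_lt (by rwa [interior_Ici] at hy)
    refine monotoneOn_of_hasDerivWithinAt_nonneg (convex_Ici a) (hf.mono (Ici_subset_Ici.2 hba))
      (fun y hy => (hf' y (hy' y hy)).hasDerivWithinAt) (fun y hy => ?_)
      (self_mem_Ici) hax hax
    rw [interior_Ici] at hy
    exact nonneg_of_mul_nonneg_right (hsign y (hba.trans_lt hy)) (sub_pos.2 hy)

theorem sub_one_mul_log_sub_nonneg {x : ℝ} (hx : 0 < x) :
    0 ≤ (x - 1) * ((x + 1) * log x - 2 * (x - 1)) := by
  rcases le_total 1 x with h1 | h1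
  · have h : 2 * (x - 1) / (x + 1) ≤ log x := by
      convert le_log_one_add_of_nonneg (sub_nonneg.2 h1) using 2 <;> ring
    rw [div_le_iff₀ (by linarith)] at h
    nlinarith
  · have h : 2 * (x⁻¹ - 1) / (x⁻¹ + 1) ≤ -log x := by
      rw [← log_inv]
      convert le_log_one_add_of_nonneg (sub_nonneg.2 ((one_le_inv₀ hx).2 h1)) using 2 <;> ring
    rw [div_le_iff₀ (by positivity)] at h
    have h' : (x + 1) * log x ≤ 2 * (x - 1) := by
      have := mul_le_mul_of_nonneg_right h hx.le
      field_simp at this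
      linarith
    nlinarith

theorem three_mul_sq_sub_one_le_mul_klFun {x : ℝ} (hx : 0 ≤ x) :
    3 * (x - 1) ^ 2 ≤ (2 * x + 4) * klFun x := by
  have hmin : IsMinOn (fun x => (2 * x + 4) * klFun x - 3 * (x - 1) ^ 2) (Ici 0) 1 := by
    refine isMinOn_Ici_of_sub_mul_hasDerivAt_nonneg
      (f' := fun y => 4 * ((y + 1) * log y - 2 * (y - 1))) zero_le_one (by fun_prop)
      (fun y hy => ?_) (fun y hy => ?_)
    · refine ((((hasDerivAt_id' y).const_mul 2).add_const 4).fun_mul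
        (hasDerivAt_klFun hy.ne')).fun_sub
        ((((hasDerivAt_id' y).sub_const 1).fun_pow 2).const_mul 3) |>.congr_deriv ?_
      simp only [klFun]
      ring
    · nlinarith [sub_one_mul_log_sub_nonneg hy]
  simpa [klFun_one] using hmin hx

theorem two_mul_mul_abs_sub_one_le {x : ℝ} (hx : 0 ≤ x) (t : ℝ) :
    2 * t * |x - 1| ≤ t ^ 2 * ((2 * x + 4) / 3) + klFun x := by
  have ha : 0 < (2 * x + 4) / 3 := by positivity
  nlinarith [three_mul_sq_sub_one_le_mul_klFun hx, sq_nonneg (t * ((2 * x + 4) / 3) - |x - 1|),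
    sq_abs (x - 1)]

variable {α : Type*} [MeasurableSpace α] {μ : Measure α}

/-- Pinsker's inequality. -/
theorem sq_integral_abs_rnDeriv_sub_one_le (P Q : Measure α) [IsProbabilityMeasure P]
    [IsProbabilityMeasure Q] (hPQ : P ≪ Q) (h_int : Integrable (llr P Q) P) :
    (∫ x, |(P.rnDeriv Q x).toReal - 1| ∂Q) ^ 2 ≤ 2 * ∫ x, llr P Q x ∂P := by
  set ρ := fun x => (P.rnDeriv Q x).toReal
  set T := ∫ x, |ρ x - 1| ∂Q
  have hρ : Integrable ρ Q := Measure.integrable_toReal_rnDeriv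
  have hρ1 : ∫ x, ρ x ∂Q = 1 := by simp [ρ, Measure.integral_toReal_rnDeriv hPQ]
  have hklFun : Integrable (fun x => klFun (ρ x)) Q := (integrable_klFun_rnDeriv_iff hPQ).2 h_int
  have hK : ∫ x, klFun (ρ x) ∂Q = ∫ x, llr P Q x ∂P := by
    simp [ρ, integral_klFun_rnDeriv hPQ h_int]
  have hlin : Integrable (fun x => 2 * ρ x + 4) Q := (hρ.const_mul 2).add (integrable_const 4)
  -- the pointwise bound at `t = T / 2` integrates to `T² ≤ T² / 2 + KL`
  have key : ∫ x, 2 * (T / 2) * |ρ x - 1| ∂Q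
      ≤ ∫ x, ((T / 2) ^ 2 * ((2 * ρ x + 4) / 3) + klFun (ρ x)) ∂Q :=
    integral_mono (((hρ.sub (integrable_const 1)).abs).const_mul _)
      (((hlin.div_const 3).const_mul _).add hklFun)
      fun x => two_mul_mul_abs_sub_one_le ENNReal.toReal_nonneg (T / 2) (x := ρ x)
  rw [integral_const_mul, integral_add ((hlin.div_const 3).const_mul _) hklFun,
    integral_const_mul, integral_div, integral_add (hρ.const_mul 2) (integrable_const 4),
    integral_const_mul, hρ1, hK] at key
  simp only [mul_one, integral_const, probReal_univ, smul_eq_mul, one_mul] at key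
  nlinarith

theorem abs_integral_sub_integral_le_mul_integral_abs_rnDeriv_sub_one {P Q : Measure α}
    [IsFiniteMeasure P] [IsFiniteMeasure Q] (hPQ : P ≪ Q) {f : α → ℝ} {C : ℝ}
    (hf : AEStronglyMeasurable f Q) (hfC : ∀ᵐ x ∂Q, |f x| ≤ C) :
    |∫ x, f x ∂Q - ∫ x, f x ∂P| ≤ C * ∫ x, |(P.rnDeriv Q x).toReal - 1| ∂Q := by
  set ρ := fun x => (P.rnDeriv Q x).toReal
  have hρ : Integrable ρ Q := Measure.integrable_toReal_rnDeriv
  have hfQ : Integrable f Q := .of_bound hf C (by simpa only [norm_eq_abs] using hfC)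
  have hfP : Integrable f P :=
    .of_bound (hf.mono_ac hPQ) C (by simpa only [norm_eq_abs] using hfC.filter_mono hPQ.ae_le)
  have hρf : Integrable (fun x => ρ x * f x) Q := (integrable_rnDeriv_smul_iff hPQ).2 hfP
  rw [← integral_rnDeriv_smul hPQ]
  simp only [smul_eq_mul]
  rw [← integral_sub hfQ hρf, ← integral_const_mul]
  refine (abs_integral_le_integral_abs).trans (integral_mono_ae (hfQ.sub hρf).abs
    (((hρ.sub (integrable_const 1)).abs).const_mul C) ?_)
  filter_upwards [hfC] with x hx
  calc |f x - ρ x * f x| = |ρ x - 1| * |f x| := by rw [← abs_mul, abs_sub_comm]; congr 1; ring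
    _ ≤ C * |ρ x - 1| := by rw [mul_comm]; exact mul_le_mul_of_nonneg_right hx (abs_nonneg _)

theorem ofReal_abs_integral_sub_integral_le_klDiv {P Q : Measure α} [IsProbabilityMeasure P]
    [IsProbabilityMeasure Q] {f : α → ℝ} {C : ℝ} (hf : AEStronglyMeasurable f Q)
    (hfQ : ∀ᵐ x ∂Q, |f x| ≤ C) (hfP : ∀ᵐ x ∂P, |f x| ≤ C) :
    ENNReal.ofReal |∫ x, f x ∂Q - ∫ x, f x ∂P| ≤
      ENNReal.ofReal C * (2 * klDiv P Q) ^ (1 / 2 : ℝ) := by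
  have hC : 0 ≤ C := (abs_nonneg _).trans hfQ.exists.choose_spec
  by_cases hKL : P ≪ Q ∧ Integrable (llr P Q) P
  · obtain ⟨hPQ, h_int⟩ := hKL
    have hK : 0 ≤ 2 * ∫ x, llr P Q x ∂P :=
      (sq_nonneg _).trans (sq_integral_abs_rnDeriv_sub_one_le P Q hPQ h_int)
    have hTV : ∫ x, |(P.rnDeriv Q x).toReal - 1| ∂Q ≤ √(2 * ∫ x, llr P Q x ∂P) :=
      le_sqrt_of_sq_le (sq_integral_abs_rnDeriv_sub_one_le P Q hPQ h_int)
    rw [klDiv, if_pos ⟨hPQ, h_int⟩, ← ENNReal.ofReal_ofNat 2, ← ENNReal.ofReal_mul zero_le_two,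
      ENNReal.ofReal_rpow_of_nonneg hK one_half_pos.le, ← sqrt_eq_rpow, ← ENNReal.ofReal_mul hC]
    exact ENNReal.ofReal_le_ofReal <|
      (abs_integral_sub_integral_le_mul_integral_abs_rnDeriv_sub_one hPQ hf hfQ).trans
        (mul_le_mul_of_nonneg_left hTV hC)
  · rw [klDiv, if_neg hKL, ENNReal.mul_top two_ne_zero, ENNReal.top_rpow_of_pos one_half_pos]
    rcases hC.eq_or_lt with rfl | hC
    · have hf0 : ∀ {ν : Measure α}, (∀ᵐ x ∂ν, |f x| ≤ 0) → ∫ x, f x ∂ν = 0 := fun h =>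
        integral_eq_zero_of_ae (h.mono fun x => abs_nonpos_iff.1)
      simp [hf0 hfQ, hf0 hfP]
    · rw [ENNReal.mul_top (ENNReal.ofReal_pos.2 hC).ne']
      exact le_top

theorem isProbabilityMeasure_withDensity_ofReal_div_integral {w : α → ℝ} (hw : Integrable w μ)
    (hw0 : 0 ≤ᵐ[μ] w) (hpos : 0 < ∫ x, w x ∂μ) :
    IsProbabilityMeasure (μ.withDensity fun x => ENNReal.ofReal (w x / ∫ x, w x ∂μ)) := by
  constructor
  rw [withDensity_apply _ MeasurableSet.univ, setLIntegral_univ,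
    ← ofReal_integral_eq_lintegral_ofReal (hw.div_const _)
      (hw0.mono fun x hx => div_nonneg hx hpos.le), integral_div, div_self hpos.ne',
    ENNReal.ofReal_one]

theorem integral_div_withDensity_ofReal_mul_div {ℓ p q : α → ℝ} {c : ℝ} (hℓ : Measurable ℓ)
    (hp : Measurable p) (hℓ0 : ∀ x, 0 ≤ ℓ x) (hp0 : ∀ x, 0 ≤ p x) (hc : 0 ≤ c)
    (hq : ∀ᵐ x ∂μ, p x = 0 → q x = 0) :
    ∫ x, q x / p x ∂μ.withDensity (fun x => ENNReal.ofReal (ℓ x * p x / c)) =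
      (∫ x, ℓ x * q x ∂μ) / c := by
  rw [integral_withDensity_eq_integral_toReal_smul ((hℓ.fun_mul hp).div_const c).ennreal_ofReal
    (ae_of_all _ fun _ => ENNReal.ofReal_lt_top), ← integral_div]
  refine integral_congr_ae (hq.mono fun x hx => ?_)
  dsimp only
  rw [ENNReal.toReal_ofReal (div_nonneg (mul_nonneg (hℓ0 x) (hp0 x)) hc), smul_eq_mul]
  rcases eq_or_ne (p x) 0 with h | h
  · simp [h, hx h]
  · field_simp

section GradientEM

variable {ℓ : α → ℝ} {pr pr' : ℝ → α → ℝ} {Θ₀ : ℝ} {U : Set ℝ} {g : α → ℝ}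

theorem hasDerivAt_integral_mul_of_dominated (hU : U ∈ 𝓝 Θ₀) (hℓ : Measurable ℓ)
    (hpr : ∀ Θ, Measurable (pr Θ)) (hpr' : Measurable (pr' Θ₀))
    (hint : Integrable (fun θ => ℓ θ * pr Θ₀ θ) μ) (hg : Integrable g μ)
    (hbound : ∀ᵐ θ ∂μ, ∀ Θ ∈ U, |ℓ θ * pr' Θ θ| ≤ g θ)
    (hderiv : ∀ᵐ θ ∂μ, ∀ Θ ∈ U, HasDerivAt (fun Θ' => pr Θ' θ) (pr' Θ θ) Θ) :
    HasDerivAt (fun Θ => ∫ θ, ℓ θ * pr Θ θ ∂μ) (∫ θ, ℓ θ * pr' Θ₀ θ ∂μ) Θ₀ :=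
  (hasDerivAt_integral_of_dominated_loc_of_deriv_le hU
    (.of_forall fun Θ => (hℓ.mul (hpr Θ)).aestronglyMeasurable) hint
    (hℓ.mul hpr').aestronglyMeasurable hbound hg
    (hderiv.mono fun θ hθ Θ hΘ => (hθ Θ hΘ).const_mul (ℓ θ))).2

/-- The Gradient-EM identity. -/
theorem deriv_log_integral_eq_integral_score (hU : U ∈ 𝓝 Θ₀) (hℓ : Measurable ℓ)
    (hpr : ∀ Θ, Measurable (pr Θ)) (hpr' : Measurable (pr' Θ₀)) (hℓ0 : ∀ θ, 0 ≤ ℓ θ)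
    (hpr0 : ∀ Θ θ, 0 ≤ pr Θ θ) (hint : Integrable (fun θ => ℓ θ * pr Θ₀ θ) μ)
    (hm0 : 0 < ∫ θ, ℓ θ * pr Θ₀ θ ∂μ) (hg : Integrable g μ)
    (hbound : ∀ᵐ θ ∂μ, ∀ Θ ∈ U, |ℓ θ * pr' Θ θ| ≤ g θ)
    (hderiv : ∀ᵐ θ ∂μ, ∀ Θ ∈ U, HasDerivAt (fun Θ' => pr Θ' θ) (pr' Θ θ) Θ) :
    deriv (fun Θ => log (∫ θ, ℓ θ * pr Θ θ ∂μ)) Θ₀ =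
      ∫ θ, pr' Θ₀ θ / pr Θ₀ θ
        ∂μ.withDensity fun θ => ENNReal.ofReal (ℓ θ * pr Θ₀ θ / ∫ θ, ℓ θ * pr Θ₀ θ ∂μ) := by
  -- a zero of the nonnegative prior is a minimum, so the score's numerator vanishes there
  have hscore : ∀ᵐ θ ∂μ, pr Θ₀ θ = 0 → pr' Θ₀ θ = 0 := hderiv.mono fun θ hθ h0 =>
    IsLocalMin.hasDerivAt_eq_zero (.of_forall fun Θ => h0 ▸ hpr0 Θ θ)
      (hθ Θ₀ (mem_of_mem_nhds hU))
  rw [integral_div_withDensity_ofReal_mul_div hℓ (hpr Θ₀) hℓ0 (hpr0 Θ₀) hm0.le hscore]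
  exact ((hasDerivAt_integral_mul_of_dominated hU hℓ hpr hpr' hint hg hbound hderiv).log
    hm0.ne').deriv

end GradientEM

theorem gem_estimation_error_bound_general
    {d : ℕ} (ℓ : (Fin d → ℝ) → ℝ) (pr pr' : ℝ → (Fin d → ℝ) → ℝ) (Θ₀ : ℝ) (U : Set ℝ)
    (hU : U ∈ nhds Θ₀)
    (hℓmeas : Measurable ℓ) (hℓ0 : ∀ θ, 0 ≤ ℓ θ)
    (hprmeas : Measurable (Function.uncurry pr))
    (hpr'meas : Measurable (Function.uncurry pr'))
    (hpr0 : ∀ Θ θ, 0 ≤ pr Θ θ)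
    (hint : ∀ Θ ∈ U, Integrable (fun θ => ℓ θ * pr Θ θ))
    (m : ℝ → ℝ) (hm : ∀ Θ, m Θ = ∫ θ, ℓ θ * pr Θ θ)
    (hm0 : 0 < m Θ₀)
    (hderiv : ∀ᵐ θ ∂(volume : Measure (Fin d → ℝ)),
      ∀ Θ ∈ U, HasDerivAt (fun Θ' => pr Θ' θ) (pr' Θ θ) Θ)
    (g : (Fin d → ℝ) → ℝ) (hg : Integrable g)
    (hbound : ∀ᵐ θ ∂(volume : Measure (Fin d → ℝ)), ∀ Θ ∈ U, |ℓ θ * pr' Θ θ| ≤ g θ)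
    (C : ℝ)
    (hCvol : ∀ᵐ θ ∂(volume : Measure (Fin d → ℝ)), |pr' Θ₀ θ / pr Θ₀ θ| ≤ C)
    (Q : Measure (Fin d → ℝ)) [IsProbabilityMeasure Q]
    (hCQ : ∀ᵐ θ ∂Q, |pr' Θ₀ θ / pr Θ₀ θ| ≤ C)
    (post : Measure (Fin d → ℝ))
    (hpostdef : post =
      (volume : Measure (Fin d → ℝ)).withDensity
        (fun θ => ENNReal.ofReal (ℓ θ * pr Θ₀ θ / m Θ₀)))
    (gHat : ℝ) (hgHat : gHat = ∫ θ, pr' Θ₀ θ / pr Θ₀ θ ∂Q) :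
    ENNReal.ofReal |gHat - deriv (fun Θ => Real.log (m Θ)) Θ₀| ≤
      ENNReal.ofReal C * (2 * klDiv post Q) ^ (1/2 : ℝ) := by
  obtain rfl : m = fun Θ => ∫ θ, ℓ θ * pr Θ θ := funext hm
  have hpr : ∀ Θ, Measurable (pr Θ) := fun Θ => hprmeas.of_uncurry_left
  have hint₀ := hint Θ₀ (mem_of_mem_nhds hU)
  have : IsProbabilityMeasure post := hpostdef ▸
    isProbabilityMeasure_withDensity_ofReal_div_integral hint₀
      (.of_forall fun θ => mul_nonneg (hℓ0 θ) (hpr0 Θ₀ θ)) hm0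
  rw [hgHat, deriv_log_integral_eq_integral_score hU hℓmeas hpr hpr'meas.of_uncurry_left hℓ0 hpr0
    hint₀ hm0 hg hbound hderiv, ← hpostdef]
  refine ofReal_abs_integral_sub_integral_le_klDiv
    (hpr'meas.of_uncurry_left.div (hpr Θ₀)).aestronglyMeasurable hCQ ?_
  exact hCvol.filter_mono (hpostdef ▸ withDensity_absolutelyContinuous _ _).ae_le

/-- **GEM meta-gradient estimation error bound.** In the setting of the hierarchical
meta-gradient identity (likelihood `ℓ` independent of `Θ`, prior family `pr(Θ, ·)`), if the
prior score `∂_Θ log pr(Θ₀, θ) = pr'(Θ₀,θ)/pr(Θ₀,θ)` is bounded by `C` (a.e. for Lebesgue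
measure and for `Q`), then the GEM estimator `gHat = E_Q[∂_Θ log pr(Θ₀, θ)]` built from any
probability measure `Q` satisfies
`|gHat − d/dΘ log m(Θ)|_{Θ₀}| ≤ C √(2 KL(post ‖ Q))`, where `post` is the posterior measure
with density `ℓ(θ)pr(Θ₀,θ)/m(Θ₀)`. -/
theorem gem_estimation_error_bound
    {d : ℕ} (ℓ : (Fin d → ℝ) → ℝ) (pr pr' : ℝ → (Fin d → ℝ) → ℝ) (Θ₀ : ℝ) (U : Set ℝ)
    (hU : U ∈ nhds Θ₀)
    (hℓmeas : Measurable ℓ) (hℓ0 : ∀ θ, 0 ≤ ℓ θ)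
    (hprmeas : Measurable (Function.uncurry pr))
    (hpr'meas : Measurable (Function.uncurry pr'))
    (hpr0 : ∀ Θ θ, 0 ≤ pr Θ θ)
    (hint : ∀ Θ ∈ U, Integrable (fun θ => ℓ θ * pr Θ θ))
    (m : ℝ → ℝ) (hm : ∀ Θ, m Θ = ∫ θ, ℓ θ * pr Θ θ)
    (hm0 : 0 < m Θ₀)
    (hpos : ∀ᵐ θ ∂(volume : Measure (Fin d → ℝ)), 0 < ℓ θ * pr Θ₀ θ)
    (hderiv : ∀ᵐ θ ∂(volume : Measure (Fin d → ℝ)),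
      ∀ Θ ∈ U, HasDerivAt (fun Θ' => pr Θ' θ) (pr' Θ θ) Θ)
    (g : (Fin d → ℝ) → ℝ) (hg : Integrable g)
    (hbound : ∀ᵐ θ ∂(volume : Measure (Fin d → ℝ)), ∀ Θ ∈ U, |ℓ θ * pr' Θ θ| ≤ g θ)
    (C : ℝ)
    (hCvol : ∀ᵐ θ ∂(volume : Measure (Fin d → ℝ)), |pr' Θ₀ θ / pr Θ₀ θ| ≤ C)
    (Q : Measure (Fin d → ℝ)) [IsProbabilityMeasure Q]
    (hCQ : ∀ᵐ θ ∂Q, |pr' Θ₀ θ / pr Θ₀ θ| ≤ C)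
    (post : Measure (Fin d → ℝ))
    (hpostdef : post =
      (volume : Measure (Fin d → ℝ)).withDensity
        (fun θ => ENNReal.ofReal (ℓ θ * pr Θ₀ θ / m Θ₀)))
    (gHat : ℝ) (hgHat : gHat = ∫ θ, pr' Θ₀ θ / pr Θ₀ θ ∂Q) :
    ENNReal.ofReal |gHat - deriv (fun Θ => Real.log (m Θ)) Θ₀| ≤
      ENNReal.ofReal C * (2 * klDiv post Q) ^ (1/2 : ℝ) :=
  gem_estimation_error_bound_general ℓ pr pr' Θ₀ U hU hℓmeas hℓ0 hprmeas hpr'meas hpr0 hint m hm hm0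
    hderiv g hg hbound C hCvol Q hCQ post hpostdef gHat hgHat
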